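/- KL divergence of an exponential tilt is the convex conjugate of the cumulant generating function evaluated at the tilted barycentre: let π be a probability measure on ℝ^d whose cumulant generating function χ(y) := log E_{x∼π}[exp(⟨y,x⟩)] is finite for every y ∈ ℝ^d. Then for every y ∈ ℝ^d the tilt T_y π has a finite barycentre and KL(T_y π ‖ π) = ⟨y, b(T_y π)⟩ − χ(y) = χ*(b(T_y π)), where χ*(x) := sup_{y∈ℝ^d} (⟨x,y⟩ − χ(y)) is the convex conjugate of χ. -/

import Mathlib

/-!
Since `d(T_y μ)/dμ = exp (⟪y, ·⟫ - χ y)`, the divergence `KL(T_y μ ‖ μ)` is the `T_y μ`-mean of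
`⟪y, ·⟫ - χ y`, i.e. `⟪y, b⟫ - χ y` with `b` the barycentre of the tilt; `b` exists because the
tilt inherits finite exponential moments in every direction. For any `y'`, Jensen's inequality
for `exp` under `T_y μ` applied to `⟪y' - y, ·⟫` gives `⟪y' - y, b⟫ ≤ χ y' - χ y`, so the
supremum defining `χ* b` is attained at `y' = y`.
-/

open MeasureTheory Real

/-- Real-valued Kullback-Leibler divergence `KL(ν‖ρ) = ∫ log (dν/dρ) dν`. -/
noncomputable def klReal {α : Type*} [MeasurableSpace α] (ν ρ : Measure α) : ℝ :=
  ∫ x, Real.log ((ν.rnDeriv ρ x).toReal) ∂ν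

/-- The exponential tilt `T_y μ`: the probability measure with density proportional to
`exp ⟨y, ·⟩` with respect to `μ`. -/
noncomputable def expTilt (d : ℕ) (μ : Measure (EuclideanSpace ℝ (Fin d)))
    (y : EuclideanSpace ℝ (Fin d)) : Measure (EuclideanSpace ℝ (Fin d)) :=
  μ.withDensity (fun x => ENNReal.ofReal
    (Real.exp ((inner ℝ y x : ℝ)) / ∫ x', Real.exp ((inner ℝ y x' : ℝ)) ∂μ))

/-- The barycentre `b(μ) = E_{x∼μ}[x]` of a measure. -/
noncomputable def bary (d : ℕ) (μ : Measure (EuclideanSpace ℝ (Fin d))) :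
    EuclideanSpace ℝ (Fin d) :=
  ∫ x, x ∂μ

section Gibbs

variable {α : Type*} [MeasurableSpace α] {μ : Measure α} {f g : α → ℝ}

lemma integral_le_log_integral_exp [IsProbabilityMeasure μ] (hg : Integrable g μ)
    (hexp : Integrable (fun x ↦ exp (g x)) μ) :
    ∫ x, g x ∂μ ≤ log (∫ x, exp (g x) ∂μ) :=
  (le_log_iff_exp_le (integral_exp_pos hexp)).2 <|
    convexOn_exp.map_integral_le continuousOn_exp isClosed_univ (by simp) hg hexp

lemma integrable_exp_sub_tilted (hf : Integrable (fun x ↦ exp (f x)) μ)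
    (hg : Integrable (fun x ↦ exp (g x)) μ) :
    Integrable (fun x ↦ exp (g x - f x)) (μ.tilted f) := by
  rw [integrable_tilted_iff hf]
  simpa only [smul_eq_mul, ← exp_add, add_sub_cancel] using hg

lemma klReal_tilted_left_self [SigmaFinite μ] [NeZero μ] (hf : Integrable (fun x ↦ exp (f x)) μ)
    (hf' : Integrable f (μ.tilted f)) :
    klReal (μ.tilted f) μ = ∫ x, f x ∂(μ.tilted f) - log (∫ x, exp (f x) ∂μ) := by
  have := isProbabilityMeasure_tilted hf
  rw [klReal, integral_congr_ae ((tilted_absolutelyContinuous μ f).ae_le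
    (log_rnDeriv_tilted_left_self hf)), integral_sub hf' (integrable_const _)]
  simp

/-- Gibbs' variational principle: the right-hand side is `KL(μ.tilted f ‖ μ)`. -/
lemma integral_sub_log_integral_exp_le_tilted [NeZero μ]
    (hf : Integrable (fun x ↦ exp (f x)) μ) (hg : Integrable (fun x ↦ exp (g x)) μ)
    (hf' : Integrable f (μ.tilted f)) (hg' : Integrable g (μ.tilted f)) :
    ∫ x, g x ∂(μ.tilted f) - log (∫ x, exp (g x) ∂μ)
      ≤ ∫ x, f x ∂(μ.tilted f) - log (∫ x, exp (f x) ∂μ) := by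
  have := isProbabilityMeasure_tilted hf
  have hjensen := integral_le_log_integral_exp (g := fun x ↦ g x - f x) (hg'.sub hf')
    (integrable_exp_sub_tilted hf hg)
  have hexp : ∫ x, exp (g x - f x) ∂(μ.tilted f) = (∫ x, exp (g x) ∂μ) / ∫ x, exp (f x) ∂μ := by
    simpa using integral_exp_tilted (μ := μ) f (g - f)
  rw [integral_sub hg' hf', hexp, log_div (integral_exp_pos hg).ne' (integral_exp_pos hf).ne']
    at hjensen
  linarith

end Gibbs

section InnerProductSpace

variable {E : Type*} [NormedAddCommGroup E] [InnerProductSpace ℝ E] [MeasurableSpace E]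

lemma integrable_id_of_integrable_exp_inner [FiniteDimensional ℝ E] {ν : Measure E}
    (h : ∀ y : E, Integrable (fun x ↦ exp (inner ℝ y x)) ν) : Integrable (fun x ↦ x) ν := by
  let b := stdOrthonormalBasis ℝ E
  have hcoord : ∀ i, Integrable (fun x ↦ inner ℝ (b i) x) ν := fun i ↦ by
    simpa using ProbabilityTheory.integrable_pow_of_integrable_exp_mul one_ne_zero
      (by simpa using h (b i)) (by simpa [← inner_neg_left] using h (-b i)) 1
  have hexpand : (fun x : E ↦ x) = fun x ↦ ∑ i, inner ℝ (b i) x • b i :=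
    funext fun x ↦ (b.sum_repr' x).symm
  rw [hexpand]
  exact integrable_finsetSum _ fun i _ ↦ (hcoord i).smul_const (b i)

variable {μ : Measure E}

lemma integrable_exp_inner_tilted (hint : ∀ y : E, Integrable (fun x ↦ exp (inner ℝ y x)) μ)
    (y c : E) : Integrable (fun x ↦ exp (inner ℝ c x)) (μ.tilted (inner ℝ y ·)) := by
  simpa [inner_add_left] using integrable_exp_sub_tilted (hint y) (hint (y + c))

lemma integrable_id_tilted_inner [FiniteDimensional ℝ E]
    (hint : ∀ y : E, Integrable (fun x ↦ exp (inner ℝ y x)) μ)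
    (y : E) : Integrable (fun x ↦ x) (μ.tilted (inner ℝ y ·)) :=
  integrable_id_of_integrable_exp_inner (integrable_exp_inner_tilted hint y)

end InnerProductSpace

/-- **KL divergence of an exponential tilt is the convex conjugate of the cumulant
generating function evaluated at the tilted barycentre.**  Let `μ` be a probability
measure on `ℝ^d` whose cumulant generating function `χ y = log E_μ[exp ⟨y,x⟩]` is finite
for every `y`.  Then for every `y`, the tilt `T_y μ` has a finite barycentre and
`KL(T_y μ ‖ μ) = ⟨y, b(T_y μ)⟩ - χ(y) = χ*(b(T_y μ))`, where
`χ*(x) = sup_y (⟨x,y⟩ - χ(y))`. -/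
theorem kl_tilt_eq_cgf_conjugate (d : ℕ)
    (μ : Measure (EuclideanSpace ℝ (Fin d))) [IsProbabilityMeasure μ]
    (hint : ∀ y : EuclideanSpace ℝ (Fin d),
      Integrable (fun x => Real.exp ((inner ℝ y x : ℝ))) μ)
    (χ : EuclideanSpace ℝ (Fin d) → ℝ)
    (hχ : ∀ y, χ y = Real.log (∫ x, Real.exp ((inner ℝ y x : ℝ)) ∂μ)) :
    ∀ y : EuclideanSpace ℝ (Fin d),
      Integrable (fun x => x) (expTilt d μ y) ∧
      klReal (expTilt d μ y) μ = (inner ℝ y (bary d (expTilt d μ y)) : ℝ) - χ y ∧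
      klReal (expTilt d μ y) μ =
        ⨆ y' : EuclideanSpace ℝ (Fin d),
          ((inner ℝ (bary d (expTilt d μ y)) y' : ℝ) - χ y') := by
  intro y
  have hid := integrable_id_tilted_inner hint y
  have hlin : ∀ c, ∫ x, inner ℝ c x ∂(μ.tilted (inner ℝ y ·))
      = inner ℝ c (bary d (expTilt d μ y)) := integral_inner hid
  have hkl : klReal (expTilt d μ y) μ = inner ℝ y (bary d (expTilt d μ y)) - χ y :=
    calc klReal (expTilt d μ y) μ
        = ∫ x, inner ℝ y x ∂(μ.tilted (inner ℝ y ·)) - log (∫ x, exp (inner ℝ y x) ∂μ) :=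
          klReal_tilted_left_self (hint y) (hid.const_inner y)
      _ = inner ℝ y (bary d (expTilt d μ y)) - χ y := by rw [hlin, hχ]
  have hgibbs : ∀ y', inner ℝ (bary d (expTilt d μ y)) y' - χ y' ≤ klReal (expTilt d μ y) μ := by
    intro y'
    have := integral_sub_log_integral_exp_le_tilted (hint y) (hint y') (hid.const_inner y)
      (hid.const_inner y')
    rwa [hlin, hlin, ← hχ, ← hχ, ← hkl, real_inner_comm] at this
  refine ⟨hid, hkl, le_antisymm ?_ (ciSup_le hgibbs)⟩
  rw [hkl, real_inner_comm]
  exact le_ciSup ⟨_, Set.forall_mem_range.2 hgibbs⟩ y
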